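/- For n ≥ 3, let J be a φ_n-injective, weakly connected quiver containing a walk of length n−1. Then J contains a closed walk, and if ℓ is the minimal length of a closed walk in J, then ℓ divides n. -/

import Mathlib

/-- A quiver: vertex set, edge set, source and target maps. -/
structure Quiv where
  V : Type
  E : Type
  s : E → V
  t : E → V

/-- A quiver homomorphism. -/
@[ext]
structure QuivHom (G H : Quiv) where
  onV : G.V → H.V
  onE : G.E → H.E
  comm_s : ∀ e, H.s (onE e) = onV (G.s e)
  comm_t : ∀ e, H.t (onE e) = onV (G.t e)

/-- Identity quiver homomorphism. -/
def QuivHom.id (G : Quiv) : QuivHom G G :=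
  ⟨_root_.id, _root_.id, fun _ => rfl, fun _ => rfl⟩

/-- Composition of quiver homomorphisms. -/
def QuivHom.comp {G H K : Quiv} (g : QuivHom H K) (f : QuivHom G H) : QuivHom G K :=
  ⟨g.onV ∘ f.onV, g.onE ∘ f.onE,
    fun e => by simp [Function.comp, g.comm_s, f.comm_s],
    fun e => by simp [Function.comp, g.comm_t, f.comm_t]⟩

/-- The directed path `P_n` with vertices `a_0, …, a_{n-1}` and edges `a_i → a_{i+1}`. -/
def Quiv.path (n : ℕ) : Quiv :=
  ⟨Fin n, Fin (n - 1), fun i => ⟨i.val, by have := i.isLt; omega⟩,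
    fun i => ⟨i.val + 1, by have := i.isLt; omega⟩⟩

/-- The directed cycle `C_n`. -/
def Quiv.cyc (n : ℕ) : Quiv :=
  ⟨Fin n, Fin n, _root_.id, fun i => ⟨(i.val + 1) % n, Nat.mod_lt _ i.pos⟩⟩

/-- The natural embedding `φ_n : P_n → C_n`. -/
def pathEmb (n : ℕ) : QuivHom (Quiv.path n) (Quiv.cyc n) where
  onV := _root_.id
  onE := fun i => ⟨i.val, by have := i.isLt; omega⟩
  comm_s := fun e => rfl
  comm_t := fun e => by
    have he := e.isLt
    apply Fin.ext
    show (e.val + 1) % n = e.val + 1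
    exact Nat.mod_eq_of_lt (by omega)

/-- `J` is `φ_n`-injective: every quiver map `P_n → J` factors through `φ_n`. -/
def PhiInj (n : ℕ) (J : Quiv) : Prop :=
  ∀ ψ : QuivHom (Quiv.path n) J, ∃ ψ' : QuivHom (Quiv.cyc n) J,
    ψ'.comp (pathEmb n) = ψ

/-- `v, e` form a walk of length `k` in `J` (only indices `< k` matter). -/
def HasWalk (J : Quiv) (k : ℕ) (v : ℕ → J.V) (e : ℕ → J.E) : Prop :=
  ∀ i < k, J.s (e i) = v i ∧ J.t (e i) = v (i + 1)

/-- There is an edge from `a` to `b` in `J`. -/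
def Quiv.Edge (J : Quiv) (a b : J.V) : Prop := ∃ f, J.s f = a ∧ J.t f = b

/-- A loaded quiver: an edge between every (ordered) pair of vertices. -/
def Quiv.Loaded (J : Quiv) : Prop := ∀ a b, J.Edge a b

/-- `H`, with partitions `A` of its vertices and `B` of its edges indexed by the
vertices and edges of `G`, is a blow-up of `G`. -/
def IsBlowup (G H : Quiv) (A : G.V → Set H.V) (B : G.E → Set H.E) : Prop :=
  (∀ w, ∃! v, w ∈ A v) ∧ (∀ f, ∃! e, f ∈ B e) ∧
  (∀ e f, f ∈ B e → H.s f ∈ A (G.s e) ∧ H.t f ∈ A (G.t e)) ∧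
  (∀ e x y, x ∈ A (G.s e) → y ∈ A (G.t e) → ∃ f ∈ B e, H.s f = x ∧ H.t f = y)

/-- Monomorphisms of quivers: injective vertex and edge maps. -/
def QuivHom.Mono {G H : Quiv} (f : QuivHom G H) : Prop :=
  Function.Injective f.onV ∧ Function.Injective f.onE

/-- A class of quiver morphisms. -/
def MorClass := ∀ D C : Quiv, Set (QuivHom D C)

/-- `J` is injective with respect to a class of morphisms `Φ`. -/
def ClassInjective (Φ : MorClass) (J : Quiv) : Prop :=
  ∀ D C (φ : QuivHom D C), φ ∈ Φ D C → ∀ ψ : QuivHom D J,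
    ∃ ψ' : QuivHom C J, ψ'.comp φ = ψ

/-- Undirected adjacency. -/
def Quiv.Adj (J : Quiv) (a b : J.V) : Prop := J.Edge a b ∨ J.Edge b a

/-- Weak connectivity. -/
def Quiv.WeaklyConnected (J : Quiv) : Prop :=
  ∀ a b : J.V, Relation.ReflTransGen J.Adj a b

/-- `J` has a closed walk of length `m`. -/
def ClosedWalk (J : Quiv) (m : ℕ) : Prop :=
  ∃ v e, HasWalk J m v e ∧ v m = v 0

/-- Cyclic successor on `Fin ℓ`. -/
def finNext {ℓ : ℕ} (i : Fin ℓ) : Fin ℓ := ⟨(i.val + 1) % ℓ, Nat.mod_lt _ i.pos⟩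

/-- Disjoint union (coproduct) of a family of quivers. -/
def Quiv.sigma {Λ : Type} (Jf : Λ → Quiv) : Quiv :=
  ⟨Σ l, (Jf l).V, Σ l, (Jf l).E,
    fun f => ⟨f.1, (Jf f.1).s f.2⟩, fun f => ⟨f.1, (Jf f.1).t f.2⟩⟩

/-
Closing a walk of length `n - 1` by the edge that `φ_n`-injectivity provides gives a closed
walk of length `n`. If `ℓ` is the minimal length of a closed walk, winding around such a walk
produces a walk of length `n - 1` whose end is `r = (n - 1) % ℓ` steps into the cycle; the
closing edge then yields a closed walk of length `r + 1`. Minimality forces `r + 1 = ℓ`,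
that is `ℓ ∣ n`.
-/

lemma PhiInj.edge_of_hasWalk {n : ℕ} (hn : 0 < n) {J : Quiv} (hJ : PhiInj n J)
    {v : ℕ → J.V} {e : ℕ → J.E} (h : HasWalk J (n - 1) v e) : J.Edge (v (n - 1)) (v 0) := by
  let ψ : QuivHom (Quiv.path n) J :=
    { onV := fun i => v i.val
      onE := fun i => e i.val
      comm_s := fun i => (h i.val i.isLt).1
      comm_t := fun i => (h i.val i.isLt).2 }
  obtain ⟨ψ', hψ'⟩ := hJ ψ
  have hV (x : Fin n) : ψ'.onV x = v x.val := congrFun (congrArg QuivHom.onV hψ') x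
  have hlast : ((Quiv.cyc n).t ⟨n - 1, by omega⟩ : Fin n) = ⟨0, hn⟩ := by
    apply Fin.ext
    show (n - 1 + 1) % n = 0
    rw [Nat.sub_add_cancel hn, Nat.mod_self]
  refine ⟨ψ'.onE ⟨n - 1, by omega⟩, ?_, ?_⟩
  · rw [ψ'.comm_s ⟨n - 1, by omega⟩]
    exact hV ⟨n - 1, by omega⟩
  · rw [ψ'.comm_t ⟨n - 1, by omega⟩, hlast]
    exact hV ⟨0, hn⟩

lemma HasWalk.mono {J : Quiv} {j k : ℕ} {v : ℕ → J.V} {e : ℕ → J.E} (h : HasWalk J k v e)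
    (hjk : j ≤ k) : HasWalk J j v e :=
  fun i hi => h i (by omega)

lemma HasWalk.closedWalk_succ {J : Quiv} {k : ℕ} {v : ℕ → J.V} {e : ℕ → J.E}
    (h : HasWalk J k v e) (hf : J.Edge (v k) (v 0)) : ClosedWalk J (k + 1) := by
  obtain ⟨f, hfs, hft⟩ := hf
  refine ⟨fun i => if i = k + 1 then v 0 else v i, fun i => if i = k then f else e i,
    fun i hi => ?_, by simp⟩
  rcases Nat.lt_succ_iff_lt_or_eq.mp hi with hik | rfl
  · have hik' : i ≠ k + 1 := by omega
    simpa [hik.ne, hik', (Nat.succ_lt_succ hik).ne] using h i hik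
  · simp [hfs, hft]

lemma HasWalk.periodic {J : Quiv} {ℓ : ℕ} (hℓ : 0 < ℓ) {v : ℕ → J.V} {e : ℕ → J.E}
    (h : HasWalk J ℓ v e) (hcl : v ℓ = v 0) (k : ℕ) :
    HasWalk J k (fun i => v (i % ℓ)) (fun i => e (i % ℓ)) := by
  intro i _
  obtain ⟨hs, ht⟩ := h (i % ℓ) (Nat.mod_lt _ hℓ)
  refine ⟨hs, ht.trans ?_⟩
  show v (i % ℓ + 1) = v ((i + 1) % ℓ)
  rw [← Nat.mod_add_mod i ℓ 1]
  obtain hlt | heq : i % ℓ + 1 < ℓ ∨ i % ℓ + 1 = ℓ := by have := Nat.mod_lt i hℓ; omega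
  · rw [Nat.mod_eq_of_lt hlt]
  · rw [heq, Nat.mod_self, hcl]

lemma PhiInj.closedWalk_self {n : ℕ} (hn : 0 < n) {J : Quiv} (hJ : PhiInj n J)
    {v : ℕ → J.V} {e : ℕ → J.E} (h : HasWalk J (n - 1) v e) : ClosedWalk J n := by
  simpa [Nat.sub_add_cancel hn] using h.closedWalk_succ (hJ.edge_of_hasWalk hn h)

lemma PhiInj.closedWalk_mod {n : ℕ} (hn : 0 < n) {J : Quiv} (hJ : PhiInj n J) {ℓ : ℕ}
    (hℓ : 0 < ℓ) (h : ClosedWalk J ℓ) : ClosedWalk J ((n - 1) % ℓ + 1) := by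
  obtain ⟨v, e, hw, hcl⟩ := h
  have hclose := hJ.edge_of_hasWalk hn (hw.periodic hℓ hcl (n - 1))
  exact (hw.mono (Nat.mod_lt _ hℓ).le).closedWalk_succ hclose

lemma Nat.dvd_of_le_sub_one_mod_add_one {n ℓ : ℕ} (hn : 0 < n) (hℓ : 0 < ℓ)
    (h : ℓ ≤ (n - 1) % ℓ + 1) : ℓ ∣ n := by
  have hmod : (n - 1) % ℓ = ℓ - 1 := by have := Nat.mod_lt (n - 1) hℓ; omega
  refine ⟨(n - 1) / ℓ + 1, ?_⟩
  have := Nat.div_add_mod (n - 1) ℓ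
  rw [Nat.mul_add, Nat.mul_one]
  omega

theorem min_closed_walk_dvd_general (n : ℕ) (hn : 3 ≤ n) (J : Quiv) (hJ : PhiInj n J)
    (hw : ∃ (v : ℕ → J.V) (e : ℕ → J.E), HasWalk J (n - 1) v e) :
    (∃ m, 1 ≤ m ∧ ClosedWalk J m) ∧
    (∀ ℓ, IsLeast {m | 1 ≤ m ∧ ClosedWalk J m} ℓ → ℓ ∣ n) := by
  have hn0 : 0 < n := by omega
  obtain ⟨v, e, hwalk⟩ := hw
  refine ⟨⟨n, hn0, hJ.closedWalk_self hn0 hwalk⟩, ?_⟩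
  rintro ℓ ⟨⟨hℓ, hcw⟩, hmin⟩
  exact Nat.dvd_of_le_sub_one_mod_add_one hn0 hℓ (hmin ⟨by omega, hJ.closedWalk_mod hn0 hℓ hcw⟩)

/-- a `φ_n`-injective weakly connected quiver with a walk of
length `n-1` has a closed walk, and the minimal closed-walk length divides `n`. -/
theorem min_closed_walk_dvd (n : ℕ) (hn : 3 ≤ n) (J : Quiv) (hJ : PhiInj n J)
    (hc : J.WeaklyConnected)
    (hw : ∃ (v : ℕ → J.V) (e : ℕ → J.E), HasWalk J (n - 1) v e) :
    (∃ m, 1 ≤ m ∧ ClosedWalk J m) ∧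
    (∀ ℓ, IsLeast {m | 1 ≤ m ∧ ClosedWalk J m} ℓ → ℓ ∣ n) :=
  min_closed_walk_dvd_general n hn J hJ hw
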